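/- arXiv:math/0611944 — 2 statements merged into one kernel-verified Lean document; each statement's English description precedes it below -/
import Mathlib

section
/- In the formal power series algebra A[[t]] over a unital associative F-algebra A (char F = 0), given L, T ∈ A with [T, L] = L, define u_a = Σ_{i≥0} ((−1)^i/i!) T_{−a}^[i] L^i t^i and v_a = Σ_{i≥0} (1/i!) T_a^[i] L^i t^i. Then v_a · u_d = (1 − L t)^{−(a+d)}, interpreted as Σ_{m≥0} C(a+d+m−1, m) L^m t^m. In particular u_a is invertible with inverse v_{−a}. -/
open Finset Polynomial

/-- Falling factorial `T_a^[k] = (T+a)(T+a−1)⋯(T+a−k+1)` in an `F`-algebra. -/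
noncomputable def fall {F A : Type*} [Field F] [Ring A] [Algebra F A]
    (x : A) (a : F) : ℕ → A
  | 0 => 1
  | n + 1 => fall x a n * (x + algebraMap F A (a - n))

section CommPart
variable {B : Type*} [CommRing B]

noncomputable def ffc (x : B) (n : ℕ) : B := ∏ k ∈ Finset.range n, (x - k)

noncomputable def rfc (x : B) (n : ℕ) : B := ∏ k ∈ Finset.range n, (x + k)

lemma ffc_succ (x : B) (n : ℕ) : ffc x (n+1) = ffc x n * (x - n) := by
  simp [ffc, Finset.prod_range_succ]

lemma rfc_eq_neg_ffc (x : B) (n : ℕ) : rfc x n = (-1)^n * ffc (-x) n := by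
  induction n with
  | zero => simp [rfc, ffc]
  | succ n ih =>
    rw [rfc, Finset.prod_range_succ, ← rfc, ih, ffc_succ]
    ring

lemma neg_pow_ffc (x : B) (n : ℕ) : (-1 : B)^n * ffc x n = rfc (-x) n := by
  rw [rfc_eq_neg_ffc, neg_neg]

/-- Chu–Vandermonde for falling factorials. -/
lemma vdm_ff (m : ℕ) (x y : B) :
    ∑ i ∈ range (m+1), (m.choose i : B) * (ffc x i * ffc y (m - i)) = ffc (x+y) m := by
  induction m with
  | zero => simp [ffc]
  | succ m ih =>
    rw [Finset.sum_range_succ' _ (m+1)]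
    have e1 : ∀ i ∈ range (m+1), (((m+1).choose (i+1) : B)) * (ffc x (i+1) * ffc y (m+1-(i+1)))
        = (m.choose i : B) * (ffc x (i+1) * ffc y (m-i)) + (m.choose (i+1) : B) * (ffc x (i+1) * ffc y (m-i)) := by
      intro i hi
      rw [Nat.choose_succ_succ']
      push_cast
      ring_nf
    rw [Finset.sum_congr rfl e1, Finset.sum_add_distrib]
    have e2 : ∑ i ∈ range (m+1), (m.choose (i+1) : B) * (ffc x (i+1) * ffc y (m-i))
          + ((m+1).choose 0 : B) * (ffc x 0 * ffc y (m+1-0))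
        = ∑ i ∈ range (m+1), (m.choose i : B) * (ffc x i * ffc y (m+1-i)) := by
      have h1 := Finset.sum_range_succ' (fun i => (m.choose i : B) * (ffc x i * ffc y (m+1-i))) (m+1)
      have h2 := Finset.sum_range_succ (fun i => (m.choose i : B) * (ffc x i * ffc y (m+1-i))) (m+1)
      rw [h2] at h1
      simp only [Nat.succ_sub_succ_eq_sub, Nat.choose_succ_self, Nat.cast_zero, zero_mul,
        add_zero, Nat.choose_zero_right, Nat.cast_one, one_mul, Nat.sub_zero] at h1 ⊢
      linear_combination -h1
    rw [add_assoc, e2, ← Finset.sum_add_distrib]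
    have e3 : ∀ i ∈ range (m+1), (m.choose i : B) * (ffc x (i+1) * ffc y (m-i))
        + (m.choose i : B) * (ffc x i * ffc y (m+1-i))
        = ((m.choose i : B) * (ffc x i * ffc y (m-i))) * (x + y - m) := by
      intro i hi
      have hi' : i ≤ m := Nat.lt_succ_iff.mp (Finset.mem_range.mp hi)
      have : m + 1 - i = (m - i) + 1 := by omega
      rw [this, ffc_succ, ffc_succ]
      have hc : ((m - i : ℕ) : B) = (m : B) - i := by
        push_cast [Nat.cast_sub hi']; ring
      rw [hc]
      ring
    rw [Finset.sum_congr rfl e3, ← Finset.sum_mul, ih, ← ffc_succ]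

/-- Chu–Vandermonde for rising factorials. -/
lemma vdm_rf (m : ℕ) (x y : B) :
    ∑ i ∈ range (m+1), (m.choose i : B) * (rfc x i * rfc y (m - i)) = rfc (x+y) m := by
  have e : ∀ i ∈ range (m+1), (m.choose i : B) * (rfc x i * rfc y (m - i))
      = (-1)^m * ((m.choose i : B) * (ffc (-x) i * ffc (-y) (m-i))) := by
    intro i hi
    have hi' : i ≤ m := Nat.lt_succ_iff.mp (Finset.mem_range.mp hi)
    rw [rfc_eq_neg_ffc, rfc_eq_neg_ffc]
    have : (-1 : B)^i * (-1)^(m-i) = (-1)^m := by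
      rw [← pow_add, Nat.add_sub_cancel' hi']
    rw [← this]; ring
  rw [Finset.sum_congr rfl e, ← Finset.mul_sum, vdm_ff, rfc_eq_neg_ffc]
  rw [neg_add]

lemma ffc_eq_rfc (y : B) (n : ℕ) : ffc y n = rfc (y - n + 1) n := by
  rw [ffc, rfc, ← Finset.prod_range_reflect (fun k => y - n + 1 + k) n]
  refine Finset.prod_congr rfl (fun k hk => ?_)
  have hk' : k < n := Finset.mem_range.mp hk
  have : ((n - 1 - k : ℕ) : B) = (n : B) - 1 - k := by
    have h1 : n - 1 - k = n - (1 + k) := by omega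
    rw [h1, Nat.cast_sub (by omega)]
    push_cast; ring
  rw [this]; ring

lemma ffc_reflect (y : B) (n : ℕ) : ffc y n = (-1)^n * ffc ((n:B) - 1 - y) n := by
  rw [ffc_eq_rfc, rfc_eq_neg_ffc]
  congr 2
  ring

end CommPart

section PolyPart
variable {F : Type*} [Field F] [CharZero F]

lemma fall_poly (a : F) (n : ℕ) :
    fall (Polynomial.X : Polynomial F) a n = ffc (X + C a) n := by
  induction n with
  | zero => rfl
  | succ n ih =>
    rw [fall, ih, ffc_succ, map_sub, Polynomial.algebraMap_eq, ← Polynomial.C_eq_natCast]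
    ring

lemma smul_pow_neg_one (j : ℕ) (p : Polynomial F) :
    ((-1 : F)^j) • p = (-1 : Polynomial F)^j * p := by
  rw [Polynomial.smul_eq_C_mul, map_pow, map_neg, map_one]

lemma natCast_smul_poly (n : ℕ) (p : Polynomial F) :
    ((n : F)) • p = (n : Polynomial F) * p := by
  rw [Polynomial.smul_eq_C_mul, ← Polynomial.C_eq_natCast]

lemma C_nat (n : ℕ) : (Polynomial.C ((n : F)) : Polynomial F) = (n : Polynomial F) :=
  (Polynomial.C_eq_natCast n).symm

lemma ffc_C (c : F) (m : ℕ) :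
    ffc (C c + (m : Polynomial F) - 1) m = C (∏ k ∈ range m, (c + k)) := by
  rw [ffc]
  have e1 : ∀ k ∈ range m, ((C c + (m : Polynomial F) - 1 - (k : Polynomial F)) : Polynomial F)
      = C c + ((m - 1 - k : ℕ) : Polynomial F) := by
    intro k hk
    have hk' : k < m := Finset.mem_range.mp hk
    have h1 : ((m - 1 - k : ℕ) : Polynomial F) = (m : Polynomial F) - 1 - k := by
      have h2 : m - 1 - k = m - (1 + k) := by omega
      rw [h2, Nat.cast_sub (by omega)]
      push_cast; ring
    rw [h1]; ring
  rw [Finset.prod_congr rfl e1,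
    Finset.prod_range_reflect (fun k => C c + ((k : ℕ) : Polynomial F)) m, map_prod]
  exact Finset.prod_congr rfl fun k _ => by rw [map_add, C_nat]

lemma rfc_C (c : F) (m : ℕ) :
    rfc (C c - (m : Polynomial F) + 1) m = C (∏ k ∈ range m, (c - k)) := by
  rw [rfc]
  have e1 : ∀ k ∈ range m, ((C c - (m : Polynomial F) + 1 + (k : Polynomial F)) : Polynomial F)
      = C c - ((m - 1 - k : ℕ) : Polynomial F) := by
    intro k hk
    have hk' : k < m := Finset.mem_range.mp hk
    have h1 : ((m - 1 - k : ℕ) : Polynomial F) = (m : Polynomial F) - 1 - k := by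
      have h2 : m - 1 - k = m - (1 + k) := by omega
      rw [h2, Nat.cast_sub (by omega)]
      push_cast; ring
    rw [h1]; ring
  rw [Finset.prod_congr rfl e1,
    Finset.prod_range_reflect (fun k => C c - ((k : ℕ) : Polynomial F)) m, map_prod]
  exact Finset.prod_congr rfl fun k _ => by rw [map_sub, C_nat]

lemma fact_ne (n : ℕ) : ((n.factorial : F)) ≠ 0 := by
  exact_mod_cast Nat.cast_ne_zero.mpr n.factorial_ne_zero

lemma keyP1 (a d : F) (m : ℕ) :
    ∑ p ∈ Finset.HasAntidiagonal.antidiagonal m,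
      (((-1 : F) ^ p.2) / (p.1.factorial * p.2.factorial)) •
        (fall (Polynomial.X : Polynomial F) a p.1 * fall Polynomial.X (-d - p.1) p.2)
    = ((∏ i ∈ range m, (a + d + i)) / m.factorial) • (1 : Polynomial F) := by
  rw [Finset.Nat.sum_antidiagonal_eq_sum_range_succ_mk]
  have hterm : ∀ i ∈ range (m+1),
      (((-1 : F) ^ (m-i)) / (i.factorial * (m-i).factorial)) •
        (fall (Polynomial.X : Polynomial F) a i * fall Polynomial.X (-d - i) (m-i))
      = ((1 : F)/m.factorial) • (((m.choose i : F)) •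
          (ffc (X + C a) i * ffc (C d + (m : Polynomial F) - 1 - X) (m-i))) := by
    intro i hi
    have hi' : i ≤ m := Nat.lt_succ_iff.mp (Finset.mem_range.mp hi)
    have h2 : ffc (X + C (-d - (i:F))) (m-i)
        = ((-1 : F)^(m-i)) • ffc (C d + (m : Polynomial F) - 1 - X) (m-i) := by
      rw [ffc_reflect (X + C (-d - (i:F))) (m-i), smul_pow_neg_one]
      congr 2
      rw [Nat.cast_sub hi', map_sub, map_neg, C_nat]
      ring
    rw [fall_poly, fall_poly, h2, mul_smul_comm, smul_smul, smul_smul]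
    congr 1
    have hfac : ((m.choose i : F)) * ((i.factorial : F) * ((m-i).factorial : F)) = (m.factorial : F) := by
      rw [← Nat.choose_mul_factorial_mul_factorial hi']
      push_cast
      ring
    have hs : ((-1:F)^(m-i)) * ((-1:F)^(m-i)) = 1 := by
      rw [← pow_add, ← two_mul, pow_mul]
      norm_num
    have hne1 : ((i.factorial : F) * ((m-i).factorial : F)) ≠ 0 :=
      mul_ne_zero (fact_ne _) (fact_ne _)
    calc ((-1 : F) ^ (m-i)) / ((i.factorial : F) * ((m-i).factorial : F)) * ((-1 : F)^(m-i))
        = (((-1 : F)^(m-i)) * ((-1:F)^(m-i))) / ((i.factorial : F) * ((m-i).factorial : F)) := by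
          ring
      _ = 1 / ((i.factorial : F) * ((m-i).factorial : F)) := by rw [hs]
      _ = ((m.choose i : F)) / (m.factorial : F) := by
          rw [div_eq_div_iff hne1 (fact_ne m)]
          linear_combination -hfac
      _ = (1 : F) / (m.factorial : F) * ((m.choose i : F)) := by ring
  rw [Finset.sum_congr rfl hterm, ← Finset.smul_sum]
  simp only [natCast_smul_poly]
  rw [vdm_ff m (X + C a) (C d + (m : Polynomial F) - 1 - X),
    show (X : Polynomial F) + C a + (C d + (m : Polynomial F) - 1 - X)
      = C (a + d) + (m : Polynomial F) - 1 by rw [map_add]; ring,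
    ffc_C (a+d) m]
  rw [show (C (∏ k ∈ range m, (a + d + (k:F)))) = (∏ k ∈ range m, (a + d + (k:F))) • (1 : Polynomial F) by
    rw [Polynomial.smul_eq_C_mul, mul_one], smul_smul]
  congr 1
  ring

lemma keyP2 (c e : F) (m : ℕ) :
    ∑ p ∈ Finset.HasAntidiagonal.antidiagonal m,
      (((-1 : F) ^ p.1) / (p.1.factorial * p.2.factorial)) •
        (fall (Polynomial.X : Polynomial F) (-c) p.1 * fall Polynomial.X (e - p.1) p.2)
    = ((∏ i ∈ range m, (c + e - i)) / m.factorial) • (1 : Polynomial F) := by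
  rw [Finset.Nat.sum_antidiagonal_eq_sum_range_succ_mk]
  have hterm : ∀ i ∈ range (m+1),
      (((-1 : F) ^ i) / (i.factorial * (m-i).factorial)) •
        (fall (Polynomial.X : Polynomial F) (-c) i * fall Polynomial.X (e - i) (m-i))
      = ((1 : F)/m.factorial) • (((m.choose i : F)) •
          (rfc (C c - X) i * rfc (X + C e - (m : Polynomial F) + 1) (m-i))) := by
    intro i hi
    have hi' : i ≤ m := Nat.lt_succ_iff.mp (Finset.mem_range.mp hi)
    have h2 : ffc (X + C (-c)) i = ((-1 : F)^i) • rfc (C c - X) i := by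
      have harg : (X : Polynomial F) + C (-c) = -(C c - X) := by rw [map_neg]; ring
      rw [harg, rfc_eq_neg_ffc, smul_pow_neg_one, ← mul_assoc, ← pow_add, ← two_mul, pow_mul]
      norm_num
    have h3 : ffc (X + C (e - (i:F))) (m-i) = rfc (X + C e - (m : Polynomial F) + 1) (m-i) := by
      rw [ffc_eq_rfc]
      congr 1
      rw [Nat.cast_sub hi', map_sub, C_nat]
      ring
    rw [fall_poly, fall_poly, h2, h3, smul_mul_assoc, smul_smul, smul_smul]
    congr 1
    have hfac : ((m.choose i : F)) * ((i.factorial : F) * ((m-i).factorial : F)) = (m.factorial : F) := by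
      rw [← Nat.choose_mul_factorial_mul_factorial hi']
      push_cast
      ring
    have hs : ((-1:F)^i) * ((-1:F)^i) = 1 := by
      rw [← pow_add, ← two_mul, pow_mul]
      norm_num
    have hne1 : ((i.factorial : F) * ((m-i).factorial : F)) ≠ 0 :=
      mul_ne_zero (fact_ne _) (fact_ne _)
    calc ((-1 : F) ^ i) / ((i.factorial : F) * ((m-i).factorial : F)) * ((-1 : F)^i)
        = (((-1 : F)^i) * ((-1:F)^i)) / ((i.factorial : F) * ((m-i).factorial : F)) := by
          ring
      _ = 1 / ((i.factorial : F) * ((m-i).factorial : F)) := by rw [hs]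
      _ = ((m.choose i : F)) / (m.factorial : F) := by
          rw [div_eq_div_iff hne1 (fact_ne m)]
          linear_combination -hfac
      _ = (1 : F) / (m.factorial : F) * ((m.choose i : F)) := by ring
  rw [Finset.sum_congr rfl hterm, ← Finset.smul_sum]
  simp only [natCast_smul_poly]
  rw [vdm_rf m (C c - X) (X + C e - (m : Polynomial F) + 1),
    show (C c : Polynomial F) - X + (X + C e - (m : Polynomial F) + 1)
      = C (c + e) - (m : Polynomial F) + 1 by rw [map_add]; ring,
    rfc_C (c+e) m]
  rw [show (C (∏ k ∈ range m, (c + e - (k:F)))) = (∏ k ∈ range m, (c + e - (k:F))) • (1 : Polynomial F) by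
    rw [Polynomial.smul_eq_C_mul, mul_one], smul_smul]
  congr 1
  ring

end PolyPart

section APart
variable {F A : Type*} [Field F] [CharZero F] [Ring A] [Algebra F A]

lemma aeval_fall (T : A) (a : F) (n : ℕ) :
    Polynomial.aeval T (fall (Polynomial.X : Polynomial F) a n) = fall T a n := by
  induction n with
  | zero => simp [fall]
  | succ n ih =>
    rw [fall, fall, map_mul, ih, map_add, aeval_X, ← Polynomial.C_eq_algebraMap, aeval_C]

variable (T L : A) (h : T * L - L * T = L)
include h

lemma comm1 (c : F) : L * (T + algebraMap F A c) = (T + algebraMap F A (c-1)) * L := by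
  have h' : L * T = T * L - L := by
    rw [eq_sub_iff_add_eq]
    rw [sub_eq_iff_eq_add] at h
    rw [h]; abel
  rw [mul_add, h', add_mul, map_sub, sub_mul, Algebra.commutes, map_one, one_mul]
  abel

lemma comm_fall (c : F) (j : ℕ) : L * fall T c j = fall T (c-1) j * L := by
  induction j with
  | zero => simp [fall]
  | succ j ih =>
    rw [fall, fall, ← mul_assoc, ih, mul_assoc, comm1 T L h, ← mul_assoc,
      show c - (j:F) - 1 = c - 1 - (j:F) from by ring]

lemma comm_pow_fall (c : F) (i j : ℕ) : L^i * fall T c j = fall T (c-i) j * L^i := by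
  induction i generalizing c with
  | zero => simp
  | succ i ih =>
    rw [pow_succ', mul_assoc, ih, ← mul_assoc, comm_fall T L h, mul_assoc, ← pow_succ',
      show c - (i:F) - 1 = c - ((i:ℕ)+1 : ℕ) from by push_cast; ring]

lemma vu (c e : F) :
    (PowerSeries.mk fun i => ((1 : F) / i.factorial) • (fall T c i * L ^ i)) *
    (PowerSeries.mk fun i => (((-1 : F) ^ i) / i.factorial) • (fall T (-e) i * L ^ i))
    = PowerSeries.mk fun m => ((∏ i ∈ Finset.range m, (c + e + i)) / m.factorial) • L ^ m := by
  ext m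
  rw [PowerSeries.coeff_mul]
  simp only [PowerSeries.coeff_mk]
  have step : ∀ p ∈ Finset.HasAntidiagonal.antidiagonal m,
      (((1 : F) / p.1.factorial) • (fall T c p.1 * L ^ p.1)) *
        ((((-1 : F) ^ p.2) / p.2.factorial) • (fall T (-e) p.2 * L ^ p.2))
      = ((((-1 : F) ^ p.2) / (p.1.factorial * p.2.factorial)) •
          (Polynomial.aeval T (fall (Polynomial.X : Polynomial F) c p.1 *
            fall Polynomial.X (-e - p.1) p.2))) * L ^ m := by
    intro p hp
    obtain ⟨i, j⟩ := p
    have hij : i + j = m := Finset.HasAntidiagonal.mem_antidiagonal.mp hp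
    rw [smul_mul_smul_comm]
    have hmid : (fall T c i * L ^ i) * (fall T (-e) j * L ^ j)
        = (fall T c i * fall T (-e - i) j) * L ^ m := by
      rw [mul_assoc, ← mul_assoc (L^i), comm_pow_fall T L h,
        show -e - (i:F) = -e - (i:F) from rfl, mul_assoc, ← pow_add, hij, ← mul_assoc]
    rw [hmid, map_mul, aeval_fall, aeval_fall, smul_mul_assoc]
    congr 2
    ring
  rw [Finset.sum_congr rfl step, ← Finset.sum_mul]
  have : ∑ p ∈ Finset.HasAntidiagonal.antidiagonal m,
      ((((-1 : F) ^ p.2) / (p.1.factorial * p.2.factorial)) •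
          (Polynomial.aeval T (fall (Polynomial.X : Polynomial F) c p.1 *
            fall Polynomial.X (-e - p.1) p.2)))
      = ((∏ i ∈ Finset.range m, (c + e + i)) / m.factorial) • (1 : A) := by
    rw [show ∀ (s : Finset (ℕ×ℕ)) (f : ℕ×ℕ → F) (g : ℕ×ℕ → Polynomial F),
        (∑ p ∈ s, f p • Polynomial.aeval T (g p)) = Polynomial.aeval T (∑ p ∈ s, f p • g p) from
        fun s f g => by rw [map_sum]; exact Finset.sum_congr rfl fun p _ => (map_smul (Polynomial.aeval T) _ _).symm]
    rw [keyP1 c e m, map_smul, map_one]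
  rw [this, smul_mul_assoc, one_mul]

lemma uv (c e : F) :
    (PowerSeries.mk fun i => (((-1 : F) ^ i) / i.factorial) • (fall T (-c) i * L ^ i)) *
    (PowerSeries.mk fun i => ((1 : F) / i.factorial) • (fall T e i * L ^ i))
    = PowerSeries.mk fun m => ((∏ i ∈ Finset.range m, (c + e - i)) / m.factorial) • L ^ m := by
  ext m
  rw [PowerSeries.coeff_mul]
  simp only [PowerSeries.coeff_mk]
  have step : ∀ p ∈ Finset.HasAntidiagonal.antidiagonal m,
      ((((-1 : F) ^ p.1) / p.1.factorial) • (fall T (-c) p.1 * L ^ p.1)) *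
        (((1 : F) / p.2.factorial) • (fall T e p.2 * L ^ p.2))
      = ((((-1 : F) ^ p.1) / (p.1.factorial * p.2.factorial)) •
          (Polynomial.aeval T (fall (Polynomial.X : Polynomial F) (-c) p.1 *
            fall Polynomial.X (e - p.1) p.2))) * L ^ m := by
    intro p hp
    obtain ⟨i, j⟩ := p
    have hij : i + j = m := Finset.HasAntidiagonal.mem_antidiagonal.mp hp
    rw [smul_mul_smul_comm]
    have hmid : (fall T (-c) i * L ^ i) * (fall T e j * L ^ j)
        = (fall T (-c) i * fall T (e - i) j) * L ^ m := by
      rw [mul_assoc, ← mul_assoc (L^i), comm_pow_fall T L h, mul_assoc, ← pow_add, hij, ← mul_assoc]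
    rw [hmid, map_mul, aeval_fall, aeval_fall, smul_mul_assoc]
    congr 2
    ring
  rw [Finset.sum_congr rfl step, ← Finset.sum_mul]
  have : ∑ p ∈ Finset.HasAntidiagonal.antidiagonal m,
      ((((-1 : F) ^ p.1) / (p.1.factorial * p.2.factorial)) •
          (Polynomial.aeval T (fall (Polynomial.X : Polynomial F) (-c) p.1 *
            fall Polynomial.X (e - p.1) p.2)))
      = ((∏ i ∈ Finset.range m, (c + e - i)) / m.factorial) • (1 : A) := by
    rw [show ∀ (s : Finset (ℕ×ℕ)) (f : ℕ×ℕ → F) (g : ℕ×ℕ → Polynomial F),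
        (∑ p ∈ s, f p • Polynomial.aeval T (g p)) = Polynomial.aeval T (∑ p ∈ s, f p • g p) from
        fun s f g => by rw [map_sum]; exact Finset.sum_congr rfl fun p _ => (map_smul (Polynomial.aeval T) _ _).symm]
    rw [keyP2 c e m, map_smul, map_one]
  rw [this, smul_mul_assoc, one_mul]

end APart

theorem v_mul_u {F A : Type*} [Field F] [CharZero F] [Ring A] [Algebra F A]
    (T L : A) (h : T * L - L * T = L) (a d : F) :
    -- `u c = Σ_{i≥0} ((−1)^i/i!) T_{−c}^[i] L^i t^i`,  `v c = Σ_{i≥0} (1/i!) T_c^[i] L^i t^i`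
    letI u : F → PowerSeries A := fun c =>
      PowerSeries.mk fun i => (((-1 : F) ^ i) / i.factorial) • (fall T (-c) i * L ^ i)
    letI v : F → PowerSeries A := fun c =>
      PowerSeries.mk fun i => ((1 : F) / i.factorial) • (fall T c i * L ^ i)
    v a * u d
        = PowerSeries.mk (fun m =>
            (((∏ i ∈ Finset.range m, (a + d + i)) / m.factorial) • (L ^ m)))
      ∧ u a * v (-a) = 1 ∧ v (-a) * u a = 1 := by
  refine ⟨vu T L h a d, ?_, ?_⟩
  · rw [uv T L h a (-a)]
    ext m
    cases m with
    | zero => simp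
    | succ n =>
      rw [PowerSeries.coeff_mk]
      rw [Finset.prod_eq_zero (Finset.mem_range.mpr (Nat.succ_pos n)) (by push_cast; ring)]
      simp [PowerSeries.coeff_one]
  · rw [vu T L h (-a) a]
    ext m
    cases m with
    | zero => simp
    | succ n =>
      rw [PowerSeries.coeff_mk]
      rw [Finset.prod_eq_zero (Finset.mem_range.mpr (Nat.succ_pos n)) (by push_cast; ring)]
      simp [PowerSeries.coeff_one]
end

section
/- Let H be a cocommutative bialgebra over F (char 0) and T a primitive element (Δ₀(T) = T⊗1 + 1⊗T). Then for all nonnegative integers m, Δ₀(T^[m]) = Σ_{i=0}^m C(m,i) T^[i] ⊗ T^[m−i], where T^[k] = T(T−1)···(T−k+1). -/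
open scoped TensorProduct

/-!
The comultiplication is an algebra map, so it sends `T^[m]` to `(T ⊗ 1 + 1 ⊗ T)^[m]`. The two
summands commute, and falling factorials of commuting elements obey the Chu–Vandermonde identity
`(x + y)^[m] = ∑ C(m, i) x^[i] y^[m - i]`; finally `(T ⊗ 1)^[i] (1 ⊗ T)^[j] = T^[i] ⊗ T^[j]`.
-/

open Polynomial

section Fall

variable {F A B : Type*} [Field F] [Ring A] [Algebra F A] [Ring B] [Algebra F B]

theorem fall_zero_eq_smeval_descPochhammer (x : A) (n : ℕ) :
    fall x (0 : F) n = (descPochhammer ℤ n).smeval x := by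
  induction n with
  | zero => simp [fall]
  | succ n ih =>
    rw [fall, ih, descPochhammer_succ_right, smeval_mul, smeval_sub, smeval_X, smeval_natCast]
    simp [sub_eq_add_neg]

theorem AlgHom.map_fall (f : A →ₐ[F] B) (x : A) (a : F) (n : ℕ) :
    f (fall x a n) = fall (f x) a n := by
  induction n with
  | zero => simp [fall]
  | succ n ih => simp [fall, ih]

theorem Commute.fall_zero_add {x y : A} (h : Commute x y) (m : ℕ) :
    fall (x + y) (0 : F) m = ∑ i ∈ Finset.range (m + 1),
      m.choose i • (fall x (0 : F) i * fall y (0 : F) (m - i)) := by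
  simp only [fall_zero_eq_smeval_descPochhammer, Ring.descPochhammer_smeval_add m h,
    Finset.Nat.sum_antidiagonal_eq_sum_range_succ_mk, nsmul_eq_mul]

end Fall

theorem comul_fall_general {F H : Type*} [Field F] [Ring H] [Bialgebra F H]
    (T : H) (hT : Coalgebra.comul T = T ⊗ₜ[F] 1 + 1 ⊗ₜ[F] T) (m : ℕ) :
    Coalgebra.comul (fall T (0 : F) m)
      = ∑ i ∈ Finset.range (m + 1),
          (m.choose i) • (fall T (0 : F) i ⊗ₜ[F] fall T (0 : F) (m - i)) := by
  have hcomm : Commute (T ⊗ₜ[F] (1 : H)) (1 ⊗ₜ[F] T) := by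
    simp [Commute, SemiconjBy]
  rw [← Bialgebra.comulAlgHom_apply, AlgHom.map_fall, Bialgebra.comulAlgHom_apply, hT,
    hcomm.fall_zero_add]
  refine Finset.sum_congr rfl fun i _ => ?_
  open Algebra.TensorProduct in
  rw [← includeLeft_apply (S := F), ← includeRight_apply, ← AlgHom.map_fall, ← AlgHom.map_fall,
    includeLeft_apply, includeRight_apply, tmul_mul_tmul, mul_one, one_mul]

theorem comul_fall {F H : Type*} [Field F] [CharZero F] [Ring H] [Bialgebra F H]
    (hcocomm : ∀ h : H, (TensorProduct.comm F H H) (Coalgebra.comul h) = Coalgebra.comul h)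
    (T : H) (hT : Coalgebra.comul T = T ⊗ₜ[F] 1 + 1 ⊗ₜ[F] T) (m : ℕ) :
    Coalgebra.comul (fall T (0 : F) m)
      = ∑ i ∈ Finset.range (m + 1),
          (m.choose i) • (fall T (0 : F) i ⊗ₜ[F] fall T (0 : F) (m - i)) :=
  comul_fall_general T hT m
end
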